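/- Fix integers b ≥ 2 and n ≥ 2. Then m_{b,n+1} - M_{b,n} - 1 > (n - 5/4)·(b-1)², and for every integer c with M_{b,n} < c < m_{b,n+1}, the function S_{[c,b]} has no fixed point; in particular the k = m_{b,n+1} - M_{b,n} - 1 consecutive values c = M_{b,n}+1, …, m_{b,n+1}-1 form a k-desert base b. -/

import Mathlib

/-!
If `a = Σ dᵢ bⁱ` is a fixed point of `S_{[c,b]}`, then `c = Σ (dᵢ bⁱ - dᵢ²)`. The summand is
at most `0` for `i = 0`, at most `(b - ⌊b/2⌋)⌊b/2⌋` for `i = 1`, and at most `(b-1)bⁱ - (b-1)²`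
for `i ≥ 2`; summing, every `a < b^(n+1)` gives `c ≤ M_{b,n}`. If `a ≥ b^(n+1)`, the digits above
the units digit contribute at least `b^(n+1) - 1` (already the leading one does, the others are
nonnegative) and the units digit at least `(b-1) - (b-1)²`, so `c ≥ m_{b,n+1}`. The size of the
gap follows from `4(b - ⌊b/2⌋)⌊b/2⌋ ≤ b²`.
-/

/-- The augmented generalized happy function: `c` plus the sum of the squares
of the base-`b` digits of `a`. -/
def S (c b a : ℕ) : ℕ := c + ((Nat.digits b a).map (· ^ 2)).sum

def digitSqSum (b a : ℕ) : ℕ := ((Nat.digits b a).map (· ^ 2)).sum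

@[simp] lemma digitSqSum_zero (b : ℕ) : digitSqSum b 0 = 0 := by
  simp [digitSqSum]

lemma digitSqSum_add_mul {b d : ℕ} (hb : 1 < b) (hd : d < b) (w : ℕ) :
    digitSqSum b (d + b * w) = d ^ 2 + digitSqSum b w := by
  by_cases h : d = 0 ∧ w = 0
  · simp [h.1, h.2]
  · rw [digitSqSum, Nat.digits_add b hb d w hd (by tauto)]
    rfl

lemma mul_sub_le_sub_half_mul_half (b d : ℕ) :
    (d : ℤ) * (b - d) ≤ (b - (b / 2 : ℕ)) * (b / 2 : ℕ) := by
  rcases Nat.even_or_odd' b with ⟨h, rfl | rfl⟩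
  · rw [Nat.mul_div_cancel_left h two_pos]
    push_cast
    nlinarith [sq_nonneg ((d : ℤ) - h)]
  · rw [show (2 * h + 1) / 2 = h by omega]
    have : 0 ≤ ((d : ℤ) - h) * (d - h - 1) := by
      rcases le_or_gt (d : ℤ) h with hd | hd <;> nlinarith
    push_cast
    nlinarith

lemma four_mul_sub_half_mul_half_le (b : ℕ) :
    4 * (((b : ℤ) - (b / 2 : ℕ)) * (b / 2 : ℕ)) ≤ (b : ℤ) ^ 2 := by
  nlinarith [sq_nonneg ((b : ℤ) - 2 * (b / 2 : ℕ))]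

lemma digit_mul_sub_sq_le {b d B : ℤ} (hd : d < b) (hB : 2 * b ≤ B) :
    d * B - d ^ 2 ≤ (b - 1) * B - (b - 1) ^ 2 := by
  nlinarith

lemma pow_length_add_digitSqSum_le {b : ℕ} (hb : 1 < b) (y : ℕ) :
    b ^ (Nat.digits b y).length + digitSqSum b y ≤ b * y + 1 := by
  induction y using Nat.strong_induction_on with
  | _ y ih =>
  rcases Nat.eq_zero_or_pos y with rfl | hy
  · simp
  obtain ⟨d, w, hd, rfl⟩ : ∃ d w, d < b ∧ y = d + b * w :=
    ⟨y % b, y / b, Nat.mod_lt y (by omega), (Nat.mod_add_div y b).symm⟩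
  have hdw : d ≠ 0 ∨ w ≠ 0 := by
    by_contra! h
    simp [h.1, h.2] at hy
  rw [Nat.digits_add b hb d w hd hdw, List.length_cons, pow_succ, digitSqSum_add_mul hb hd w]
  rcases Nat.eq_zero_or_pos w with rfl | hw
  · simp only [Nat.digits_zero, List.length_nil, pow_zero, one_mul, digitSqSum_zero, add_zero,
      mul_zero] at hdw ⊢
    have hd1 : (1 : ℤ) ≤ d := by omega
    zify at hd ⊢
    nlinarith [mul_nonneg (sub_nonneg.2 hd1) (by linarith : (0 : ℤ) ≤ b - d - 1)]
  · have ih_w := ih w (by nlinarith)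
    have hlen := Nat.base_pow_length_digits_le b w hb hw.ne'
    nlinarith

lemma pow_mul_sub_digitSqSum_le {b : ℕ} (hb : 2 ≤ b) (k : ℕ) {i z : ℕ} (hi : 2 ≤ i)
    (hz : z < b ^ k) :
    (b : ℤ) ^ i * z - digitSqSum b z ≤ (b : ℤ) ^ (i + k) - (b : ℤ) ^ i - k * ((b : ℤ) - 1) ^ 2 := by
  induction k generalizing i z with
  | zero => simp_all
  | succ k ih =>
    obtain ⟨d, w, hd, rfl⟩ : ∃ d w, d < b ∧ z = d + b * w :=
      ⟨z % b, z / b, Nat.mod_lt z (by omega), (Nat.mod_add_div z b).symm⟩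
    have hw : w < b ^ k := by rw [pow_succ] at hz; nlinarith
    have ih_w := ih (i := i + 1) (by omega) hw
    have hB : 2 * (b : ℤ) ≤ (b : ℤ) ^ i := by
      calc 2 * (b : ℤ) ≤ (b : ℤ) ^ 2 := by nlinarith [(by exact_mod_cast hb : (2 : ℤ) ≤ b)]
        _ ≤ (b : ℤ) ^ i := pow_le_pow_right₀ (by omega) hi
    have hdigit := digit_mul_sub_sq_le (d := (d : ℤ)) (by exact_mod_cast hd) hB
    rw [digitSqSum_add_mul (by omega) hd w]
    rw [show i + 1 + k = i + (k + 1) by omega, pow_succ] at ih_w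
    push_cast
    linarith

lemma sub_digitSqSum_le_of_lt_pow {b n a : ℕ} (hb : 2 ≤ b) (hn : 1 ≤ n) (ha : a < b ^ (n + 1)) :
    (a : ℤ) - digitSqSum b a ≤ (b : ℤ) ^ (n + 1) - (b : ℤ) ^ 2 - ((n : ℤ) - 1) * ((b : ℤ) - 1) ^ 2 +
      ((b : ℤ) - (b / 2 : ℕ)) * (b / 2 : ℕ) := by
  obtain ⟨k, rfl⟩ : ∃ k, n = k + 1 := ⟨n - 1, by omega⟩
  obtain ⟨d₀, d₁, z, hd₀, hd₁, rfl⟩ : ∃ d₀ d₁ z, d₀ < b ∧ d₁ < b ∧ a = d₀ + b * (d₁ + b * z) :=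
    ⟨a % b, a / b % b, a / b / b, Nat.mod_lt _ (by omega), Nat.mod_lt _ (by omega), by
      rw [Nat.mod_add_div, Nat.mod_add_div]⟩
  have hz : z < b ^ k := by
    rw [pow_succ, pow_succ] at ha
    by_contra! h
    nlinarith [Nat.mul_le_mul_right b (Nat.mul_le_mul_right b h)]
  have htail := pow_mul_sub_digitSqSum_le hb k le_rfl hz
  have hmid := mul_sub_le_sub_half_mul_half b d₁
  have hlow : (d₀ : ℤ) ≤ (d₀ : ℤ) ^ 2 := by exact_mod_cast Nat.le_self_pow two_ne_zero d₀
  rw [digitSqSum_add_mul (by omega) hd₀, digitSqSum_add_mul (by omega) hd₁,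
    show 2 + k = k + 1 + 1 by omega] at *
  simp only [Nat.cast_add, Nat.cast_mul, Nat.cast_pow, Nat.cast_one]
  linarith

lemma le_sub_digitSqSum_of_pow_le {b : ℕ} (hb : 2 ≤ b) (n : ℕ) {a : ℕ} (ha : b ^ (n + 1) ≤ a) :
    (b : ℤ) ^ (n + 1) - (b : ℤ) ^ 2 + 3 * b - 3 ≤ (a : ℤ) - digitSqSum b a := by
  obtain ⟨d, y, hd, rfl⟩ : ∃ d y, d < b ∧ a = d + b * y :=
    ⟨a % b, a / b, Nat.mod_lt a (by omega), (Nat.mod_add_div a b).symm⟩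
  have hy : b ^ n ≤ y := by rw [pow_succ] at ha; nlinarith
  have hlen : n + 1 ≤ (Nat.digits b y).length :=
    (Nat.pow_lt_pow_iff_right (by omega)).1 (hy.trans_lt (Nat.lt_base_pow_length_digits hb))
  have hy_pow := pow_le_pow_right₀ (by omega : 1 ≤ b) hlen
  have hy_sum := pow_length_add_digitSqSum_le (by omega : 1 < b) y
  have hdigit : (b : ℤ) - 1 - ((b : ℤ) - 1) ^ 2 ≤ d - (d : ℤ) ^ 2 := by
    have : (d : ℤ) < b := by exact_mod_cast hd
    nlinarith
  rw [digitSqSum_add_mul (by omega) hd]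
  zify at hy_pow hy_sum
  push_cast
  linarith

theorem stmt_18 (b n : ℕ) (hb : 2 ≤ b) (hn : 2 ≤ n) :
    4 * (((b : ℤ) ^ (n + 1) - (b : ℤ) ^ 2 + 3 * b - 3) -
        ((b : ℤ) ^ (n + 1) - (b : ℤ) ^ 2 - ((n : ℤ) - 1) * ((b : ℤ) - 1) ^ 2 +
          ((b : ℤ) - ((b / 2 : ℕ) : ℤ)) * ((b / 2 : ℕ) : ℤ)) - 1) >
      (4 * (n : ℤ) - 5) * ((b : ℤ) - 1) ^ 2 ∧
    ∀ c : ℕ,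
      ((b : ℤ) ^ (n + 1) - (b : ℤ) ^ 2 - ((n : ℤ) - 1) * ((b : ℤ) - 1) ^ 2 +
          ((b : ℤ) - ((b / 2 : ℕ) : ℤ)) * ((b / 2 : ℕ) : ℤ)) < (c : ℤ) →
      (c : ℤ) < (b : ℤ) ^ (n + 1) - (b : ℤ) ^ 2 + 3 * b - 3 →
      ¬ ∃ a : ℕ, 0 < a ∧ S c b a = a := by
  have hbZ : (2 : ℤ) ≤ b := by exact_mod_cast hb
  refine ⟨by linarith [four_mul_sub_half_mul_half_le b], ?_⟩
  rintro c hM hm ⟨a, -, hfix⟩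
  have hc : (c : ℤ) + digitSqSum b a = a := by exact_mod_cast hfix
  rcases lt_or_ge a (b ^ (n + 1)) with ha | ha
  · linarith [sub_digitSqSum_le_of_lt_pow hb (by omega) ha]
  · linarith [le_sub_digitSqSum_of_pow_le hb n ha]
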